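/- In the group G = ⟨a, b, c ∣ a²b = ba², b²a = ab², a²c = ca², b²c = cb², a²b² = c²⟩, the subgroup generated by a² and b² is a free abelian group of rank 2, and it equals the center of G. -/
import Mathlib


/-- Relations of the presentation `⟨a,b,c ∣ a²b=ba², b²a=ab², a²c=ca², b²c=cb², a²b²=c²⟩`
of the braid group `B₂(Σ_{1,0})`, as elements of the free group on `a = 0`, `b = 1`, `c = 2`. -/
def grels : Set (FreeGroup (Fin 3)) :=
  { FreeGroup.of 0 ^ 2 * FreeGroup.of 1 * (FreeGroup.of 1 * FreeGroup.of 0 ^ 2)⁻¹,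
    FreeGroup.of 1 ^ 2 * FreeGroup.of 0 * (FreeGroup.of 0 * FreeGroup.of 1 ^ 2)⁻¹,
    FreeGroup.of 0 ^ 2 * FreeGroup.of 2 * (FreeGroup.of 2 * FreeGroup.of 0 ^ 2)⁻¹,
    FreeGroup.of 1 ^ 2 * FreeGroup.of 2 * (FreeGroup.of 2 * FreeGroup.of 1 ^ 2)⁻¹,
    FreeGroup.of 0 ^ 2 * FreeGroup.of 1 ^ 2 * (FreeGroup.of 2 ^ 2)⁻¹ }

/-- Relations `a² = b² = c² = 1` of the universal Coxeter group `W(a,b,c)`. -/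
def wrels : Set (FreeGroup (Fin 3)) :=
  { FreeGroup.of 0 ^ 2, FreeGroup.of 1 ^ 2, FreeGroup.of 2 ^ 2 }

/-- The braid group `B₂(Σ_{1,0})` via the presentation above. -/
abbrev G := PresentedGroup grels

/-- The universal Coxeter group `W(a,b,c) = ℤ/2 * ℤ/2 * ℤ/2`. -/
abbrev W := PresentedGroup wrels

def ga : G := PresentedGroup.of 0
def gb : G := PresentedGroup.of 1
def gc : G := PresentedGroup.of 2
def wa : W := PresentedGroup.of 0
def wb : W := PresentedGroup.of 1
def wc : W := PresentedGroup.of 2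

lemma mk_rel {r : FreeGroup (Fin 3)} (h : r ∈ grels) : PresentedGroup.mk grels r = 1 :=
  (QuotientGroup.eq_one_iff r).2 (Subgroup.subset_normalClosure h)

lemma rel_ab : ga ^ 2 * gb = gb * ga ^ 2 := by
  have h := mk_rel (Set.mem_insert _ _)
  rw [map_mul, map_mul, map_inv, map_mul, map_pow, mul_inv_eq_one] at h
  exact h

lemma rel_ba : gb ^ 2 * ga = ga * gb ^ 2 := by
  have h := mk_rel (Set.mem_insert_of_mem _ (Set.mem_insert _ _))
  rw [map_mul, map_mul, map_inv, map_mul, map_pow, mul_inv_eq_one] at h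
  exact h

lemma rel_ac : ga ^ 2 * gc = gc * ga ^ 2 := by
  have h := mk_rel (Set.mem_insert_of_mem _ (Set.mem_insert_of_mem _ (Set.mem_insert _ _)))
  rw [map_mul, map_mul, map_inv, map_mul, map_pow, mul_inv_eq_one] at h
  exact h

lemma rel_bc : gb ^ 2 * gc = gc * gb ^ 2 := by
  have h := mk_rel (Set.mem_insert_of_mem _ (Set.mem_insert_of_mem _
    (Set.mem_insert_of_mem _ (Set.mem_insert _ _))))
  rw [map_mul, map_mul, map_inv, map_mul, map_pow, mul_inv_eq_one] at h
  exact h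

lemma rel_c : ga ^ 2 * gb ^ 2 = gc ^ 2 := by
  have h := mk_rel (show _ ∈ grels from Set.mem_insert_of_mem _ (Set.mem_insert_of_mem _
    (Set.mem_insert_of_mem _ (Set.mem_insert_of_mem _ rfl))))
  rw [map_mul, map_inv, map_mul, map_pow, map_pow, map_pow, mul_inv_eq_one] at h
  exact h

lemma ga_sq_mem_center : ga ^ 2 ∈ Subgroup.center G := by
  rw [Subgroup.mem_center_iff]
  intro g
  have hg : g ∈ Subgroup.closure (Set.range (PresentedGroup.of : Fin 3 → G)) := by
    rw [PresentedGroup.closure_range_of]; trivial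
  induction hg using Subgroup.closure_induction with
  | mem x hx =>
    obtain ⟨i, rfl⟩ := hx
    fin_cases i
    · exact ((Commute.refl ga).pow_right 2).symm
    · exact rel_ab.symm
    · exact rel_ac.symm
  | one => simp
  | mul x y _ _ hx hy => exact Commute.mul_left hx hy
  | inv x _ hx => exact Commute.inv_left hx

lemma gb_sq_mem_center : gb ^ 2 ∈ Subgroup.center G := by
  rw [Subgroup.mem_center_iff]
  intro g
  have hg : g ∈ Subgroup.closure (Set.range (PresentedGroup.of : Fin 3 → G)) := by
    rw [PresentedGroup.closure_range_of]; trivial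
  induction hg using Subgroup.closure_induction with
  | mem x hx =>
    obtain ⟨i, rfl⟩ := hx
    fin_cases i
    · exact rel_ba.symm
    · exact ((Commute.refl gb).pow_right 2).symm
    · exact rel_bc.symm
  | one => simp
  | mul x y _ _ hx hy => exact Commute.mul_left hx hy
  | inv x _ hx => exact Commute.inv_left hx

def HH : Subgroup G := Subgroup.closure ({ga ^ 2, gb ^ 2} : Set G)

lemma HH_le_center : HH ≤ Subgroup.center G := by
  rw [HH, Subgroup.closure_le]
  rintro x (rfl | rfl)
  · exact ga_sq_mem_center
  · exact gb_sq_mem_center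

instance : HH.Normal := by
  constructor
  intro n hn g
  have h := Subgroup.mem_center_iff.mp (HH_le_center hn) g
  rw [h, mul_assoc, mul_inv_cancel, mul_one]
  exact hn

lemma ga_sq_mem : ga ^ 2 ∈ HH := Subgroup.subset_closure (Set.mem_insert _ _)
lemma gb_sq_mem : gb ^ 2 ∈ HH := Subgroup.subset_closure (Set.mem_insert_of_mem _ rfl)
lemma gc_sq_mem : gc ^ 2 ∈ HH := rel_c ▸ HH.mul_mem ga_sq_mem gb_sq_mem

lemma of_sq_mem : ∀ i : Fin 3, (PresentedGroup.of i : G) ^ 2 ∈ HH := by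
  intro i
  fin_cases i
  · exact ga_sq_mem
  · exact gb_sq_mem
  · exact gc_sq_mem

open Monoid in
abbrev P := CoprodI (fun _ : Fin 3 => Multiplicative (ZMod 2))

def x₀ : Multiplicative (ZMod 2) := Multiplicative.ofAdd 1

def γ (i : Fin 3) : P := Monoid.CoprodI.of (M := fun _ : Fin 3 => Multiplicative (ZMod 2)) (i := i) x₀

lemma x₀_sq : x₀ * x₀ = 1 := by decide

lemma x₀_ne_one : x₀ ≠ 1 := by decide

lemma γ_sq (i : Fin 3) : γ i * γ i = 1 := by
  rw [γ, ← map_mul, x₀_sq, map_one]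

def π : G →* P :=
  PresentedGroup.toGroup (f := γ) (by
    have hsq : ∀ i : Fin 3, (γ i) ^ 2 = 1 := fun i => by rw [pow_two, γ_sq]
    intro r hr
    simp only [grels, Set.mem_insert_iff, Set.mem_singleton_iff] at hr
    rcases hr with rfl | rfl | rfl | rfl | rfl <;>
      simp [map_mul, map_pow, map_inv, FreeGroup.lift_apply_of, hsq])

lemma π_of (i : Fin 3) : π (PresentedGroup.of i) = γ i := PresentedGroup.toGroup.of _

lemma P_center (p : P) (hp : ∀ i : Fin 3, p * γ i = γ i * p) : p = 1 := by
  by_contra hne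
  set w : Monoid.CoprodI.Word _ := Monoid.CoprodI.Word.equiv p with hwdef
  have hw : w ≠ Monoid.CoprodI.Word.empty := by
    intro h
    apply hne
    have : Monoid.CoprodI.Word.equiv.symm w = p := Equiv.symm_apply_apply _ _
    rw [h] at this
    rw [← this]
    exact Monoid.CoprodI.Word.prod_empty
  obtain ⟨i, j, w', hw'⟩ := Monoid.CoprodI.NeWord.of_word w hw
  obtain ⟨k, hki, hkj⟩ : ∃ k : Fin 3, k ≠ i ∧ k ≠ j := by
    have : ∀ i j : Fin 3, ∃ k : Fin 3, k ≠ i ∧ k ≠ j := by decide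
    exact this i j
  have hwp : w'.prod = p := by
    have : Monoid.CoprodI.Word.prod w = p := Equiv.symm_apply_apply Monoid.CoprodI.Word.equiv p
    rw [Monoid.CoprodI.NeWord.prod, hw', this]
  set w'' := (Monoid.CoprodI.NeWord.singleton (i := k) x₀ x₀_ne_one).append hki
      (w'.append hkj.symm (Monoid.CoprodI.NeWord.singleton (i := k) x₀ x₀_ne_one)) with hw''def
  have hprod : w''.prod = p := by
    rw [hw''def, Monoid.CoprodI.NeWord.append_prod, Monoid.CoprodI.NeWord.append_prod,
      Monoid.CoprodI.NeWord.prod_singleton, hwp]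
    show γ k * (p * γ k) = p
    rw [hp k, ← mul_assoc, γ_sq, one_mul]
  have heq : w''.toWord = w := by
    have h1 : w''.toWord.prod = p := hprod
    have h2 : Monoid.CoprodI.Word.prod w = p := Equiv.symm_apply_apply Monoid.CoprodI.Word.equiv p
    have : Monoid.CoprodI.Word.equiv.symm w''.toWord = Monoid.CoprodI.Word.equiv.symm w := by
      show Monoid.CoprodI.Word.prod _ = Monoid.CoprodI.Word.prod _
      rw [h1, h2]
    exact Monoid.CoprodI.Word.equiv.symm.injective this
  have hhead : w''.toWord.toList.head? = some ⟨k, w''.head⟩ := Monoid.CoprodI.NeWord.toList_head? _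
  have hhead' : w.toList.head? = some ⟨i, w'.head⟩ := by
    rw [← hw']
    exact Monoid.CoprodI.NeWord.toList_head? _
  rw [heq, hhead'] at hhead
  exact hki (congrArg (fun o => (Option.getD o ⟨k, x₀⟩).1) hhead.symm)

def involHom {Q : Type*} [Group Q] (x : Q) (hx : x * x = 1) : Multiplicative (ZMod 2) →* Q where
  toFun m := if Multiplicative.toAdd m = 1 then x else 1
  map_one' := by simp
  map_mul' a b := by
    have h2 : ∀ m : ZMod 2, m = 0 ∨ m = 1 := by decide
    rcases h2 (Multiplicative.toAdd a) with h | h <;> rcases h2 (Multiplicative.toAdd b) with h' | h' <;>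
      simp [toAdd_mul, h, h', hx]

lemma involHom_x₀ {Q : Type*} [Group Q] (x : Q) (hx : x * x = 1) : involHom x hx x₀ = x := rfl

abbrev Qu := G ⧸ HH

def σ : P →* Qu :=
  Monoid.CoprodI.lift (fun i : Fin 3 =>
    involHom (QuotientGroup.mk (PresentedGroup.of i) : Qu)
      (by rw [← QuotientGroup.mk_mul, QuotientGroup.eq_one_iff, ← pow_two]; exact of_sq_mem i))

lemma σ_γ (i : Fin 3) : σ (γ i) = QuotientGroup.mk (PresentedGroup.of i) := by
  rw [γ, σ, Monoid.CoprodI.lift_of]; rfl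

lemma σ_π (g : G) : σ (π g) = QuotientGroup.mk g := by
  have : σ.comp π = QuotientGroup.mk' HH := by
    apply PresentedGroup.ext
    intro x
    show σ (π (PresentedGroup.of x)) = _
    rw [π_of, σ_γ]
    rfl
  exact congrFun (congrArg (fun f => f.toFun) this) g

lemma center_le_HH : Subgroup.center G ≤ HH := by
  intro z hz
  have hπz : π z = 1 := by
    apply P_center
    intro i
    rw [← π_of i, ← map_mul, ← map_mul,
        Subgroup.mem_center_iff.mp hz (PresentedGroup.of i)]
  have : (QuotientGroup.mk z : Qu) = 1 := by rw [← σ_π, hπz, map_one]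
  exact (QuotientGroup.eq_one_iff z).mp this

lemma HH_eq_center : HH = Subgroup.center G := le_antisymm HH_le_center center_le_HH

def fab : Fin 3 → ℤ × ℤ := ![(1, 0), (0, 1), (1, 1)]

def φab : G →* Multiplicative (ℤ × ℤ) :=
  PresentedGroup.toGroup (f := fun i => Multiplicative.ofAdd (fab i)) (by
    intro r hr
    simp only [grels, Set.mem_insert_iff, Set.mem_singleton_iff] at hr
    rcases hr with rfl | rfl | rfl | rfl | rfl <;>
      · simp only [map_mul, map_pow, map_inv, FreeGroup.lift_apply_of, mul_inv_eq_one]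
        rw [mul_comm] <;> try rfl)

lemma φab_of (i : Fin 3) : φab (PresentedGroup.of i) = Multiplicative.ofAdd (fab i) :=
  PresentedGroup.toGroup.of _

lemma commAB : Commute (ga ^ 2) (gb ^ 2) :=
  (Subgroup.mem_center_iff.mp ga_sq_mem_center (gb ^ 2)).symm

def ψ0 : Multiplicative (ℤ × ℤ) →* G where
  toFun p := (ga ^ 2) ^ (Multiplicative.toAdd p).1 * (gb ^ 2) ^ (Multiplicative.toAdd p).2
  map_one' := by simp
  map_mul' p q := by
    show (ga ^ 2) ^ ((Multiplicative.toAdd p).1 + (Multiplicative.toAdd q).1)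
        * (gb ^ 2) ^ ((Multiplicative.toAdd p).2 + (Multiplicative.toAdd q).2)
      = ((ga ^ 2) ^ (Multiplicative.toAdd p).1 * (gb ^ 2) ^ (Multiplicative.toAdd p).2)
        * ((ga ^ 2) ^ (Multiplicative.toAdd q).1 * (gb ^ 2) ^ (Multiplicative.toAdd q).2)
    rw [zpow_add, zpow_add]
    exact Commute.mul_mul_mul_comm (commAB.zpow_zpow _ _) _ _

lemma ψ0_apply (m n : ℤ) :
    ψ0 (Multiplicative.ofAdd (m, n)) = (ga ^ 2) ^ m * (gb ^ 2) ^ n := rfl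

lemma ψ0_a : ψ0 (Multiplicative.ofAdd (1, 0)) = ga ^ 2 := by
  rw [ψ0_apply]; group

lemma ψ0_b : ψ0 (Multiplicative.ofAdd (0, 1)) = gb ^ 2 := by
  rw [ψ0_apply]; group

lemma φab_ψ0 (p : ℤ × ℤ) :
    φab (ψ0 (Multiplicative.ofAdd p)) = Multiplicative.ofAdd (2 * p.1, 2 * p.2) := by
  obtain ⟨m, n⟩ := p
  have h0 : φab ga = Multiplicative.ofAdd (fab 0) := φab_of 0
  have h1 : φab gb = Multiplicative.ofAdd (fab 1) := φab_of 1
  rw [ψ0_apply, map_mul, map_zpow, map_zpow, map_pow, map_pow, h0, h1]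
  rw [← ofAdd_nsmul, ← ofAdd_nsmul, ← ofAdd_zsmul, ← ofAdd_zsmul, ← ofAdd_add]
  apply congrArg
  simp [fab, Prod.ext_iff]
  constructor <;> ring

lemma ψ0_injective : Function.Injective ψ0 := by
  intro p q h
  have h1 := congrArg φab h
  rw [← ofAdd_toAdd p, ← ofAdd_toAdd q, φab_ψ0, φab_ψ0] at h1
  have h2 := Multiplicative.ofAdd.injective h1
  have e1 : 2 * (Multiplicative.toAdd p).1 = 2 * (Multiplicative.toAdd q).1 := congrArg Prod.fst h2
  have e2 : 2 * (Multiplicative.toAdd p).2 = 2 * (Multiplicative.toAdd q).2 := congrArg Prod.snd h2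
  have h3 : Multiplicative.toAdd p = Multiplicative.toAdd q := Prod.ext (by omega) (by omega)
  exact Multiplicative.toAdd.injective h3
lemma ψ0_mem (p : Multiplicative (ℤ × ℤ)) : ψ0 p ∈ HH :=
  HH.mul_mem (HH.zpow_mem ga_sq_mem _) (HH.zpow_mem gb_sq_mem _)

def ψ1 : Multiplicative (ℤ × ℤ) →* HH := ψ0.codRestrict HH ψ0_mem

lemma ψ1_bijective : Function.Bijective ψ1 := by
  constructor
  · intro p q h
    exact ψ0_injective (congrArg Subtype.val h)
  · rintro ⟨h, hh⟩
    have hle : HH ≤ ψ0.range := by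
      rw [HH, Subgroup.closure_le]
      rintro x (rfl | rfl)
      · exact ⟨Multiplicative.ofAdd (1, 0), ψ0_a⟩
      · exact ⟨Multiplicative.ofAdd (0, 1), ψ0_b⟩
    obtain ⟨p, hp⟩ := hle hh
    exact ⟨p, Subtype.ext hp⟩

noncomputable def E : Multiplicative (ℤ × ℤ) ≃* HH := MulEquiv.ofBijective ψ1 ψ1_bijective

noncomputable def e' : HH ≃* Multiplicative (ℤ × ℤ) := E.symm

lemma e'_a : e' ⟨ga ^ 2, ga_sq_mem⟩ = Multiplicative.ofAdd (1, 0) := by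
  rw [e', MulEquiv.symm_apply_eq]
  exact (Subtype.ext ψ0_a.symm)

lemma e'_b : e' ⟨gb ^ 2, gb_sq_mem⟩ = Multiplicative.ofAdd (0, 1) := by
  rw [e', MulEquiv.symm_apply_eq]
  exact (Subtype.ext ψ0_b.symm)

theorem stmt_11 :
    Subgroup.closure ({ga ^ 2, gb ^ 2} : Set G) = Subgroup.center G ∧
    ∃ e : Subgroup.closure ({ga ^ 2, gb ^ 2} : Set G) ≃* Multiplicative (ℤ × ℤ),
      e ⟨ga ^ 2, Subgroup.subset_closure (Set.mem_insert _ _)⟩ =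
          Multiplicative.ofAdd (1, 0) ∧
      e ⟨gb ^ 2, Subgroup.subset_closure (Set.mem_insert_of_mem _ rfl)⟩ =
          Multiplicative.ofAdd (0, 1) := by
  exact ⟨HH_eq_center, e', e'_a, e'_b⟩
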